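/- arXiv:2001.09790 — 6 statements merged into one kernel-verified Lean document; each statement's English description precedes it below -/
import Mathlib

section
/- Legendre's relation: for every k ∈ (0,1), K'(k)·E(k) + K(k)·E'(k) − K(k)·K'(k) = π/2. -/
open Real

/-- Complete elliptic integral of the first kind. -/
noncomputable def ellK (k : ℝ) : ℝ :=
  ∫ θ in (0:ℝ)..(π/2), 1 / Real.sqrt (1 - k^2 * Real.sin θ ^ 2)

/-- Complete elliptic integral of the second kind. -/
noncomputable def ellE (k : ℝ) : ℝ :=
  ∫ θ in (0:ℝ)..(π/2), Real.sqrt (1 - k^2 * Real.sin θ ^ 2)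

/-- Complementary complete elliptic integral of the first kind. -/
noncomputable def ellK' (k : ℝ) : ℝ := ellK (Real.sqrt (1 - k^2))

/-- Complementary complete elliptic integral of the second kind. -/
noncomputable def ellE' (k : ℝ) : ℝ := ellE (Real.sqrt (1 - k^2))

/-!
Differentiating under the integral sign gives `dE/dk = (E - K) / k` and
`dK/dk = (E - k'² K) / (k k'²)`, the latter because `θ ↦ k² sin θ cos θ / √Δ`, with
`Δ = 1 - k² sin² θ`, is an antiderivative of `√Δ - k'² / (Δ √Δ)`. By the chain rule through
`k ↦ k'`, the Legendre combination `K' E + K E' - K K'` then has derivative zero on `(0, 1)`, so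
it is constant there. Its value is its limit as `k → 0⁺`, where `K → π / 2`, `E' → E(1) = 1`
and `0 ≤ K' (K - E) ≤ K' k² K ≤ (π / 2) k K → 0`.
-/

open MeasureTheory Set Filter Topology
open scoped Interval

lemma hasDerivAt_intervalIntegral_of_continuousOn {F F' : ℝ → ℝ → ℝ} {x₀ a b : ℝ}
    {s : Set ℝ} (hs : s ∈ 𝓝 x₀) (hF : ∀ x ∈ s, ContinuousOn (F x) [[a, b]])
    (hF' : ContinuousOn (Function.uncurry F') (s ×ˢ [[a, b]]))
    (hdiff : ∀ x ∈ s, ∀ t ∈ [[a, b]], HasDerivAt (F · t) (F' x t) x) :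
    HasDerivAt (fun x => ∫ t in a..b, F x t) (∫ t in a..b, F' x₀ t) x₀ := by
  obtain ⟨K, hK, hKs, hKc⟩ := local_compact_nhds hs
  obtain ⟨C, hC⟩ := (hKc.prod isCompact_uIcc).exists_bound_of_continuousOn
    (hF'.mono (prod_mono hKs subset_rfl))
  have hx₀ : x₀ ∈ s := mem_of_mem_nhds hs
  have hF'x₀ : ContinuousOn (F' x₀) [[a, b]] :=
    hF'.comp (continuous_const.prodMk continuous_id).continuousOn fun t ht => ⟨hx₀, ht⟩
  refine (intervalIntegral.hasDerivAt_integral_of_dominated_loc_of_deriv_le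
    (bound := fun _ => C) hK (eventually_of_mem hs fun x hx => ?_) (hF x₀ hx₀).intervalIntegrable
    ((hF'x₀.mono uIoc_subset_uIcc).aestronglyMeasurable measurableSet_uIoc)
    (ae_of_all _ fun t ht x hx => hC (x, t) ⟨hx, uIoc_subset_uIcc ht⟩) intervalIntegrable_const
    (ae_of_all _ fun t ht x hx => hdiff x (hKs hx) t (uIoc_subset_uIcc ht))).2
  exact ((hF x hx).mono uIoc_subset_uIcc).aestronglyMeasurable measurableSet_uIoc

local notation "Δ(" k ", " θ ")" => 1 - k ^ 2 * Real.sin θ ^ 2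

lemma one_sub_sq_pos {k : ℝ} (hk : |k| < 1) : 0 < 1 - k ^ 2 :=
  sub_pos.2 ((sq_lt_one_iff_abs_lt_one k).2 hk)

lemma one_sub_sq_mul_sin_sq_pos {k : ℝ} (hk : |k| < 1) (θ : ℝ) : 0 < Δ(k, θ) := by
  nlinarith [one_sub_sq_pos hk, sin_sq_le_one θ, sq_nonneg k]

lemma continuous_sqrt_one_sub_sq_mul_sin_sq (k : ℝ) : Continuous fun θ => √Δ(k, θ) := by
  fun_prop

lemma continuous_one_div_sqrt_one_sub_sq_mul_sin_sq {k : ℝ} (hk : |k| < 1) :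
    Continuous fun θ => 1 / √Δ(k, θ) :=
  continuous_const.div (by fun_prop) fun θ => (sqrt_pos.2 (one_sub_sq_mul_sin_sq_pos hk θ)).ne'

lemma continuous_one_div_mul_sqrt_one_sub_sq_mul_sin_sq {k : ℝ} (hk : |k| < 1) :
    Continuous fun θ => 1 / (Δ(k, θ) * √Δ(k, θ)) :=
  continuous_const.div (by fun_prop) fun θ =>
    (mul_pos (one_sub_sq_mul_sin_sq_pos hk θ) (sqrt_pos.2 (one_sub_sq_mul_sin_sq_pos hk θ))).ne'

lemma hasDerivAt_sqrt_one_sub_sq_mul {c x : ℝ} (h : 0 < 1 - x ^ 2 * c) :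
    HasDerivAt (fun x => √(1 - x ^ 2 * c)) (-(x * c) / √(1 - x ^ 2 * c)) x := by
  convert ((hasDerivAt_pow 2 x).mul_const c).const_sub 1 |>.sqrt h.ne' using 1
  field_simp
  ring

lemma hasDerivAt_one_div_sqrt_one_sub_sq_mul {c x : ℝ} (h : 0 < 1 - x ^ 2 * c) :
    HasDerivAt (fun x => 1 / √(1 - x ^ 2 * c))
      (x * c / ((1 - x ^ 2 * c) * √(1 - x ^ 2 * c))) x := by
  have hs := sqrt_pos.2 h
  have := (hasDerivAt_sqrt_one_sub_sq_mul h).fun_inv hs.ne'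
  simp only [one_div]
  refine this.congr_deriv ?_
  rw [sq_sqrt h.le]
  field_simp

lemma hasDerivAt_sq_mul_sin_mul_cos_div_sqrt {k θ : ℝ} (h : 0 < Δ(k, θ)) :
    HasDerivAt (fun θ => k ^ 2 * (sin θ * cos θ / √Δ(k, θ)))
      (√Δ(k, θ) - (1 - k ^ 2) / (Δ(k, θ) * √Δ(k, θ))) θ := by
  have hΔ : HasDerivAt (fun θ => Δ(k, θ)) (-(k ^ 2 * (2 * sin θ * cos θ))) θ := by
    simpa using (((hasDerivAt_sin θ).pow 2).const_mul (k ^ 2)).const_sub 1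
  have hs := sqrt_pos.2 h
  refine (((hasDerivAt_sin θ).mul (hasDerivAt_cos θ)).div (hΔ.sqrt h.ne') hs.ne').const_mul
    (k ^ 2) |>.congr_deriv ?_
  have hsq := sq_sqrt h.le
  simp only [Pi.mul_apply]
  field_simp
  rw [hsq]
  linear_combination k ^ 2 * Δ(k, θ) * cos_sq' θ

lemma one_sub_sq_mul_integral_inv_pow_three_halves_eq_ellE {k : ℝ} (hk : |k| < 1) :
    (1 - k ^ 2) * ∫ θ in (0:ℝ)..(π/2), 1 / (Δ(k, θ) * √Δ(k, θ)) = ellE k := by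
  have hint : Continuous fun θ => (1 - k ^ 2) / (Δ(k, θ) * √Δ(k, θ)) := by
    simpa only [mul_one_div] using
      (continuous_one_div_mul_sqrt_one_sub_sq_mul_sin_sq hk).const_mul (1 - k ^ 2)
  have hsqrt := continuous_sqrt_one_sub_sq_mul_sin_sq k
  have hFTC := intervalIntegral.integral_eq_sub_of_hasDerivAt
    (fun θ _ => hasDerivAt_sq_mul_sin_mul_cos_div_sqrt (one_sub_sq_mul_sin_sq_pos hk θ))
    ((hsqrt.sub hint).intervalIntegrable 0 (π/2))
  rw [intervalIntegral.integral_sub (hsqrt.intervalIntegrable _ _)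
    (hint.intervalIntegrable _ _)] at hFTC
  simp only [sin_zero, cos_pi_div_two, zero_mul, mul_zero, zero_div, sub_zero] at hFTC
  rw [← intervalIntegral.integral_const_mul]
  simp only [mul_one_div]
  rw [ellE]
  linarith

lemma isOpen_abs_lt_one : IsOpen {x : ℝ | |x| < 1} :=
  isOpen_lt continuous_abs continuous_const

lemma hasDerivAt_ellE_integral {k : ℝ} (hk : |k| < 1) :
    HasDerivAt ellE (∫ θ in (0:ℝ)..(π/2), -(k * sin θ ^ 2) / √Δ(k, θ)) k := by
  refine hasDerivAt_intervalIntegral_of_continuousOn (isOpen_abs_lt_one.mem_nhds hk)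
    (fun x _ => by fun_prop) ?_ fun x hx θ _ =>
      hasDerivAt_sqrt_one_sub_sq_mul (one_sub_sq_mul_sin_sq_pos hx θ)
  exact ContinuousOn.div (by fun_prop) (by fun_prop) fun p hp =>
    (sqrt_pos.2 (one_sub_sq_mul_sin_sq_pos hp.1 p.2)).ne'

lemma hasDerivAt_ellK_integral {k : ℝ} (hk : |k| < 1) :
    HasDerivAt ellK
      (∫ θ in (0:ℝ)..(π/2), k * sin θ ^ 2 / (Δ(k, θ) * √Δ(k, θ))) k := by
  refine hasDerivAt_intervalIntegral_of_continuousOn (isOpen_abs_lt_one.mem_nhds hk)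
    (fun x hx => (continuous_one_div_sqrt_one_sub_sq_mul_sin_sq hx).continuousOn) ?_
    fun x hx θ _ => hasDerivAt_one_div_sqrt_one_sub_sq_mul (one_sub_sq_mul_sin_sq_pos hx θ)
  exact ContinuousOn.div (by fun_prop) (by fun_prop) fun p hp =>
    (mul_pos (one_sub_sq_mul_sin_sq_pos hp.1 p.2)
      (sqrt_pos.2 (one_sub_sq_mul_sin_sq_pos hp.1 p.2))).ne'

lemma hasDerivAt_ellE {k : ℝ} (hk₀ : k ≠ 0) (hk : |k| < 1) :
    HasDerivAt ellE ((ellE k - ellK k) / k) k := by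
  convert hasDerivAt_ellE_integral hk using 1
  rw [div_eq_iff hk₀, mul_comm, ← intervalIntegral.integral_const_mul, ellE, ellK,
    ← intervalIntegral.integral_sub
      ((continuous_sqrt_one_sub_sq_mul_sin_sq k).intervalIntegrable _ _)
      ((continuous_one_div_sqrt_one_sub_sq_mul_sin_sq hk).intervalIntegrable _ _)]
  refine intervalIntegral.integral_congr fun θ _ => ?_
  have hΔ := one_sub_sq_mul_sin_sq_pos hk θ
  field_simp
  linear_combination sq_sqrt hΔ.le

lemma hasDerivAt_ellK {k : ℝ} (hk₀ : k ≠ 0) (hk : |k| < 1) :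
    HasDerivAt ellK ((ellE k - (1 - k ^ 2) * ellK k) / (k * (1 - k ^ 2))) k := by
  have hk' := (one_sub_sq_pos hk).ne'
  convert hasDerivAt_ellK_integral hk using 1
  rw [div_eq_iff (mul_ne_zero hk₀ hk'),
    ← one_sub_sq_mul_integral_inv_pow_three_halves_eq_ellE hk, ellK,
    ← mul_sub, ← intervalIntegral.integral_sub
      ((continuous_one_div_mul_sqrt_one_sub_sq_mul_sin_sq hk).intervalIntegrable _ _)
      ((continuous_one_div_sqrt_one_sub_sq_mul_sin_sq hk).intervalIntegrable _ _),
    ← mul_assoc, ← intervalIntegral.integral_mul_const, mul_comm]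
  congr 1
  refine intervalIntegral.integral_congr fun θ _ => ?_
  have hΔ := one_sub_sq_mul_sin_sq_pos hk θ
  field_simp
  ring

lemma abs_lt_one_of_mem_Ioo {k : ℝ} (hk : k ∈ Ioo (0:ℝ) 1) : |k| < 1 :=
  abs_lt.2 ⟨by linarith [hk.1], hk.2⟩

lemma sqrt_one_sub_sq_mem_Ioo {k : ℝ} (hk : k ∈ Ioo (0:ℝ) 1) : √(1 - k ^ 2) ∈ Ioo (0:ℝ) 1 :=
  ⟨sqrt_pos.2 (one_sub_sq_pos (abs_lt_one_of_mem_Ioo hk)),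
    (sqrt_lt' one_pos).2 (by nlinarith [hk.1])⟩

lemma hasDerivAt_sqrt_one_sub_sq {k : ℝ} (hk : |k| < 1) :
    HasDerivAt (fun x => √(1 - x ^ 2)) (-k / √(1 - k ^ 2)) k := by
  simpa using hasDerivAt_sqrt_one_sub_sq_mul (c := 1) (by simpa using one_sub_sq_pos hk)

lemma hasDerivAt_ellK' {k : ℝ} (hk : k ∈ Ioo (0:ℝ) 1) :
    HasDerivAt ellK' (-(ellE' k - k ^ 2 * ellK' k) / (k * (1 - k ^ 2))) k := by
  have hk₁ := one_sub_sq_pos (abs_lt_one_of_mem_Ioo hk)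
  have hk' := sqrt_one_sub_sq_mem_Ioo hk
  have hsq : √(1 - k ^ 2) ^ 2 = 1 - k ^ 2 := sq_sqrt hk₁.le
  refine ((hasDerivAt_ellK hk'.1.ne' (abs_lt_one_of_mem_Ioo hk')).comp k
    (hasDerivAt_sqrt_one_sub_sq (abs_lt_one_of_mem_Ioo hk))).congr_deriv ?_
  rw [ellK', ellE', hsq]
  have hk₀ := hk.1.ne'
  have hk'₀ := hk'.1.ne'
  field_simp
  rw [hsq]
  ring

lemma hasDerivAt_ellE' {k : ℝ} (hk : k ∈ Ioo (0:ℝ) 1) :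
    HasDerivAt ellE' (-(k * (ellE' k - ellK' k)) / (1 - k ^ 2)) k := by
  have hk' := sqrt_one_sub_sq_mem_Ioo hk
  have hsq : √(1 - k ^ 2) ^ 2 = 1 - k ^ 2 := sq_sqrt (one_sub_sq_pos (abs_lt_one_of_mem_Ioo hk)).le
  refine ((hasDerivAt_ellE hk'.1.ne' (abs_lt_one_of_mem_Ioo hk')).comp k
    (hasDerivAt_sqrt_one_sub_sq (abs_lt_one_of_mem_Ioo hk))).congr_deriv ?_
  rw [ellK', ellE']
  field_simp
  rw [hsq]

noncomputable def legendre (k : ℝ) : ℝ := ellK' k * ellE k + ellK k * ellE' k - ellK k * ellK' k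

lemma hasDerivAt_legendre {k : ℝ} (hk : k ∈ Ioo (0:ℝ) 1) : HasDerivAt legendre 0 k := by
  have hK := hasDerivAt_ellK hk.1.ne' (abs_lt_one_of_mem_Ioo hk)
  have hE := hasDerivAt_ellE hk.1.ne' (abs_lt_one_of_mem_Ioo hk)
  refine (((hasDerivAt_ellK' hk).mul hE).add (hK.mul (hasDerivAt_ellE' hk))).sub
    (hK.mul (hasDerivAt_ellK' hk)) |>.congr_deriv ?_
  have hk₀ := hk.1.ne'
  have hk₁ := (one_sub_sq_pos (abs_lt_one_of_mem_Ioo hk)).ne'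
  field_simp
  ring

lemma exists_legendre_eq_const : ∃ c, ∀ k ∈ Ioo (0:ℝ) 1, legendre k = c :=
  isOpen_Ioo.exists_is_const_of_deriv_eq_zero isPreconnected_Ioo
    (fun _ hk => (hasDerivAt_legendre hk).differentiableAt.differentiableWithinAt)
    fun _ hk => (hasDerivAt_legendre hk).deriv

lemma ellK_zero : ellK 0 = π / 2 := by
  simp [ellK]

lemma ellE_one : ellE 1 = 1 := by
  have hcos : ∀ θ ∈ [[0, π / 2]], √(1 - 1 ^ 2 * sin θ ^ 2) = cos θ := fun θ hθ => by
    rw [uIcc_of_le (by positivity)] at hθ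
    rw [one_pow, one_mul, ← cos_sq',
      sqrt_sq (cos_nonneg_of_mem_Icc ⟨by linarith [hθ.1, pi_pos], hθ.2⟩)]
  rw [ellE, intervalIntegral.integral_congr hcos, integral_cos]
  simp

lemma continuous_ellE : Continuous ellE :=
  intervalIntegral.continuous_parametric_intervalIntegral_of_continuous' (by fun_prop) _ _

lemma ellK_nonneg (k : ℝ) : 0 ≤ ellK k :=
  intervalIntegral.integral_nonneg (by positivity) fun _ _ => by positivity

lemma ellK_le {k : ℝ} (hk : |k| < 1) : ellK k ≤ π / 2 / √(1 - k ^ 2) := by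
  calc ellK k ≤ ∫ θ in (0:ℝ)..(π/2), 1 / √(1 - k ^ 2) :=
        intervalIntegral.integral_mono_on (by positivity)
          ((continuous_one_div_sqrt_one_sub_sq_mul_sin_sq hk).intervalIntegrable _ _)
          intervalIntegrable_const fun θ _ =>
            one_div_le_one_div_of_le (sqrt_pos.2 (one_sub_sq_pos hk))
              (sqrt_le_sqrt (by nlinarith [sin_sq_le_one θ, sq_nonneg k]))
    _ = π / 2 / √(1 - k ^ 2) := by
        rw [intervalIntegral.integral_const, smul_eq_mul]
        ring

lemma ellE_le_ellK {k : ℝ} (hk : |k| < 1) : ellE k ≤ ellK k := by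
  refine intervalIntegral.integral_mono_on (by positivity)
    ((continuous_sqrt_one_sub_sq_mul_sin_sq k).intervalIntegrable _ _)
    ((continuous_one_div_sqrt_one_sub_sq_mul_sin_sq hk).intervalIntegrable _ _) fun θ _ => ?_
  have hΔ := one_sub_sq_mul_sin_sq_pos hk θ
  rw [le_div_iff₀ (sqrt_pos.2 hΔ), mul_self_sqrt hΔ.le]
  nlinarith [sq_nonneg (k * sin θ)]

lemma ellK_sub_ellE_le {k : ℝ} (hk : |k| < 1) : ellK k - ellE k ≤ k ^ 2 * ellK k := by
  rw [ellK, ellE, ← intervalIntegral.integral_sub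
    ((continuous_one_div_sqrt_one_sub_sq_mul_sin_sq hk).intervalIntegrable _ _)
    ((continuous_sqrt_one_sub_sq_mul_sin_sq k).intervalIntegrable _ _),
    ← intervalIntegral.integral_const_mul]
  refine intervalIntegral.integral_mono_on (by positivity)
    (((continuous_one_div_sqrt_one_sub_sq_mul_sin_sq hk).sub
      (continuous_sqrt_one_sub_sq_mul_sin_sq k)).intervalIntegrable _ _)
    (((continuous_one_div_sqrt_one_sub_sq_mul_sin_sq hk).const_mul _).intervalIntegrable _ _)
    fun θ _ => ?_
  have hΔ := one_sub_sq_mul_sin_sq_pos hk θ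
  have hsub : 1 / √Δ(k, θ) - √Δ(k, θ) = k ^ 2 * sin θ ^ 2 * (1 / √Δ(k, θ)) := by
    field_simp
    rw [sq_sqrt hΔ.le]
    ring
  rw [hsub]
  exact mul_le_mul_of_nonneg_right
    (mul_le_of_le_one_right (sq_nonneg k) (sin_sq_le_one θ)) (by positivity)

lemma ellK'_le {k : ℝ} (hk : k ∈ Ioo (0:ℝ) 1) : ellK' k ≤ π / 2 / k := by
  have h := ellK_le (abs_lt_one_of_mem_Ioo (sqrt_one_sub_sq_mem_Ioo hk))
  rwa [sq_sqrt (one_sub_sq_pos (abs_lt_one_of_mem_Ioo hk)).le, sub_sub_cancel, sqrt_sq hk.1.le] at h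

lemma neg_mul_le_ellK'_mul_ellE_sub_ellK {k : ℝ} (hk : k ∈ Ioo (0:ℝ) 1) :
    -(π / 2 * (k * ellK k)) ≤ ellK' k * (ellE k - ellK k) := by
  have h₁ : ellK' k * (ellK k - ellE k) ≤ ellK' k * (k ^ 2 * ellK k) :=
    mul_le_mul_of_nonneg_left (ellK_sub_ellE_le (abs_lt_one_of_mem_Ioo hk)) (ellK_nonneg _)
  have h₂ : ellK' k * (k ^ 2 * ellK k) ≤ π / 2 / k * (k ^ 2 * ellK k) :=
    mul_le_mul_of_nonneg_right (ellK'_le hk) (mul_nonneg (sq_nonneg k) (ellK_nonneg k))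
  have h₃ : π / 2 / k * (k ^ 2 * ellK k) = π / 2 * (k * ellK k) := by
    field_simp [hk.1.ne']
  linarith

lemma ellK'_mul_ellE_sub_ellK_nonpos {k : ℝ} (hk : k ∈ Ioo (0:ℝ) 1) :
    ellK' k * (ellE k - ellK k) ≤ 0 :=
  mul_nonpos_of_nonneg_of_nonpos (ellK_nonneg _)
    (sub_nonpos.2 (ellE_le_ellK (abs_lt_one_of_mem_Ioo hk)))

lemma tendsto_legendre_zero : Tendsto legendre (𝓝[>] 0) (𝓝 (π / 2)) := by
  have hK : Tendsto ellK (𝓝[>] 0) (𝓝 (π / 2)) := by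
    rw [← ellK_zero]
    exact (hasDerivAt_ellK_integral (by simp)).continuousAt.tendsto.mono_left nhdsWithin_le_nhds
  have hE' : Tendsto ellE' (𝓝[>] 0) (𝓝 1) := by
    have : Tendsto ellE' (𝓝 0) (𝓝 (ellE √(1 - 0 ^ 2))) :=
      (continuous_ellE.comp (by fun_prop : Continuous fun k : ℝ => √(1 - k ^ 2))).tendsto 0
    simpa [ellE_one] using this.mono_left (nhdsWithin_le_nhds (s := Ioi 0))
  have hlower : Tendsto (fun k => -(π / 2 * (k * ellK k))) (𝓝[>] 0) (𝓝 0) := by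
    simpa using
      ((tendsto_nhdsWithin_of_tendsto_nhds tendsto_id).mul hK).const_mul (π / 2) |>.neg
  have hmem : Ioo (0:ℝ) 1 ∈ 𝓝[>] 0 := Ioo_mem_nhdsGT one_pos
  have hrem : Tendsto (fun k => ellK' k * (ellE k - ellK k)) (𝓝[>] 0) (𝓝 0) :=
    tendsto_of_tendsto_of_tendsto_of_le_of_le' hlower tendsto_const_nhds
      (eventually_of_mem hmem fun _ => neg_mul_le_ellK'_mul_ellE_sub_ellK)
      (eventually_of_mem hmem fun _ => ellK'_mul_ellE_sub_ellK_nonpos)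
  have hsum : legendre = fun k => ellK' k * (ellE k - ellK k) + ellK k * ellE' k := by
    funext k
    rw [legendre]
    ring
  simpa [hsum] using hrem.add (hK.mul hE')

/-- Legendre's relation. -/
theorem stmt_1 (k : ℝ) (hk : k ∈ Set.Ioo (0:ℝ) 1) :
    ellK' k * ellE k + ellK k * ellE' k - ellK k * ellK' k = π/2 := by
  obtain ⟨c, hc⟩ := exists_legendre_eq_const
  have hlim : Tendsto legendre (𝓝[>] 0) (𝓝 c) :=
    tendsto_const_nhds.congr' <|
      eventually_of_mem (Ioo_mem_nhdsGT one_pos) fun x hx => (hc x hx).symm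
  rw [← legendre, hc k hk, tendsto_nhds_unique hlim tendsto_legendre_zero]
end

section
/- For every k ∈ (0,1), the improper integral ∫₀^∞ (1−k²)/(√(1+t²)·(√(1+k²t²) + k·√(1+t²))) dt converges and equals K'(k) − E'(k). -/
/-!
Write `A = √(1 + k²t²)` and `B = √(1 + t²)`. Rationalising gives `integrand = A / B - k`, and
differentiating `t (A / B - k)` gives `integrand - (1 - k²) t² / ((1 + t²) B A)`. Since
`t (A / B - k)` vanishes at `0` and at `∞`, both integrands have the same integral over `(0, ∞)`.
Under `t = tan θ` the second one becomes `k'² sin²θ / √(1 - k'² sin²θ) dθ`, which is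
`1 / Δ - Δ` for `Δ = √(1 - k'² sin²θ)`, the integrand of `K(k') - E(k')`.
-/

open Real MeasureTheory

open Set Filter Topology

noncomputable def ellKSubEIntegrand (m θ : ℝ) : ℝ :=
  m ^ 2 * sin θ ^ 2 / √(1 - m ^ 2 * sin θ ^ 2)

lemma ellK_sub_ellE {m : ℝ} (hm : m ^ 2 < 1) :
    ellK m - ellE m = ∫ θ in (0:ℝ)..(π / 2), ellKSubEIntegrand m θ := by
  have hΔ : ∀ θ, 0 < 1 - m ^ 2 * sin θ ^ 2 := fun θ => by
    nlinarith [sin_sq_le_one θ, sq_nonneg (sin θ), sq_nonneg m]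
  have hK : Continuous fun θ => 1 / √(1 - m ^ 2 * sin θ ^ 2) :=
    continuous_const.div (by fun_prop) fun θ => (sqrt_pos.mpr (hΔ θ)).ne'
  rw [ellK, ellE, ← intervalIntegral.integral_sub (hK.intervalIntegrable _ _)
    ((by fun_prop : Continuous fun θ => √(1 - m ^ 2 * sin θ ^ 2)).intervalIntegrable _ _)]
  refine intervalIntegral.integral_congr fun θ _ => ?_
  have hsq := sq_sqrt (hΔ θ).le
  have hpos := sqrt_pos.mpr (hΔ θ)
  simp only [ellKSubEIntegrand]
  field_simp
  linear_combination -hsq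

lemma image_arctan_Ioi_zero : arctan '' Ioi 0 = Ioo 0 (π / 2) := by
  ext y
  simp only [mem_image, mem_Ioi, mem_Ioo]
  constructor
  · rintro ⟨x, hx, rfl⟩
    exact ⟨arctan_zero ▸ arctan_strictMono hx, arctan_lt_pi_div_two x⟩
  · rintro ⟨h0, hπ⟩
    exact ⟨tan y, tan_pos_of_pos_of_lt_pi_div_two h0 hπ,
      arctan_tan (by linarith [pi_pos]) hπ⟩

lemma integral_comp_arctan_div_one_add_sq (f : ℝ → ℝ) :
    ∫ t in Ioi (0:ℝ), f (arctan t) / (1 + t ^ 2) = ∫ θ in (0:ℝ)..(π / 2), f θ := by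
  have h := integral_image_eq_integral_abs_deriv_smul (measurableSet_Ioi (a := 0))
    (fun t _ => (hasDerivAt_arctan t).hasDerivWithinAt) arctan_injective.injOn f
  rw [image_arctan_Ioi_zero, ← integral_Ioc_eq_integral_Ioo,
    ← intervalIntegral.integral_of_le (by positivity)] at h
  rw [h]
  refine setIntegral_congr_fun measurableSet_Ioi fun t _ => ?_
  rw [smul_eq_mul, abs_of_pos (by positivity), div_eq_inv_mul, one_div, mul_comm]

section

variable {k : ℝ}

noncomputable def integrand (k t : ℝ) : ℝ :=
  (1 - k ^ 2) / (√(1 + t ^ 2) * (√(1 + k ^ 2 * t ^ 2) + k * √(1 + t ^ 2)))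

noncomputable def tanPullback (k t : ℝ) : ℝ :=
  (1 - k ^ 2) * t ^ 2 / ((1 + t ^ 2) * √(1 + t ^ 2) * √(1 + k ^ 2 * t ^ 2))

lemma integrand_eq_sqrt_div_sqrt_sub (hk : 0 ≤ k) (t : ℝ) :
    integrand k t = √(1 + k ^ 2 * t ^ 2) / √(1 + t ^ 2) - k := by
  have hA := sq_sqrt (by positivity : (0:ℝ) ≤ 1 + k ^ 2 * t ^ 2)
  have hB := sq_sqrt (by positivity : (0:ℝ) ≤ 1 + t ^ 2)
  have : 0 < √(1 + k ^ 2 * t ^ 2) + k * √(1 + t ^ 2) := by positivity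
  rw [integrand]
  field_simp
  linear_combination -hA + k ^ 2 * hB

lemma ellKSubEIntegrand_arctan_div_one_add_sq (m : ℝ) (hm : m ^ 2 = 1 - k ^ 2) (t : ℝ) :
    ellKSubEIntegrand m (arctan t) / (1 + t ^ 2) = tanPullback k t := by
  have hB := sq_sqrt (by positivity : (0:ℝ) ≤ 1 + t ^ 2)
  have hsin : sin (arctan t) ^ 2 = t ^ 2 / (1 + t ^ 2) := by rw [sin_arctan, div_pow, hB]
  have hΔ : 1 - m ^ 2 * (t ^ 2 / (1 + t ^ 2)) = (1 + k ^ 2 * t ^ 2) / (1 + t ^ 2) := by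
    rw [hm]; field_simp; ring
  rw [ellKSubEIntegrand, hsin, hΔ, sqrt_div (by positivity), tanPullback, hm]
  field_simp
  rw [hB]

lemma hasDerivAt_sqrt_div_sqrt (t : ℝ) :
    HasDerivAt (fun t => √(1 + k ^ 2 * t ^ 2) / √(1 + t ^ 2))
      (-((1 - k ^ 2) * t / ((1 + t ^ 2) * √(1 + t ^ 2) * √(1 + k ^ 2 * t ^ 2)))) t := by
  have hA := sq_sqrt (by positivity : (0:ℝ) ≤ 1 + k ^ 2 * t ^ 2)
  have hB := sq_sqrt (by positivity : (0:ℝ) ≤ 1 + t ^ 2)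
  have hA' : HasDerivAt (fun t => 1 + k ^ 2 * t ^ 2) (k ^ 2 * (2 * t)) t := by
    simpa using ((hasDerivAt_pow 2 t).const_mul (k ^ 2)).const_add 1
  have hB' : HasDerivAt (fun t => 1 + t ^ 2) (2 * t) t := by
    simpa using (hasDerivAt_pow 2 t).const_add 1
  refine ((hA'.sqrt (by positivity)).div (hB'.sqrt (by positivity)) (by positivity)).congr_deriv ?_
  field_simp
  rw [hA, hB]
  ring

lemma continuous_integrand (hk : 0 ≤ k) : Continuous (integrand k) :=
  continuous_const.div (by fun_prop) fun t => by positivity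

lemma continuous_tanPullback : Continuous (tanPullback k) :=
  (by fun_prop : Continuous fun t : ℝ => (1 - k ^ 2) * t ^ 2).div (by fun_prop)
    fun t => by positivity

lemma norm_integrand_le (hk : 0 < k) (t : ℝ) :
    ‖integrand k t‖ ≤ |1 - k ^ 2| / k * (1 + t ^ 2)⁻¹ := by
  have hB := sq_sqrt (by positivity : (0:ℝ) ≤ 1 + t ^ 2)
  have hD : k * (1 + t ^ 2) ≤ √(1 + t ^ 2) * (√(1 + k ^ 2 * t ^ 2) + k * √(1 + t ^ 2)) := by
    nlinarith [mul_pos (sqrt_pos.mpr (by positivity : (0:ℝ) < 1 + t ^ 2))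
      (sqrt_pos.mpr (by positivity : (0:ℝ) < 1 + k ^ 2 * t ^ 2))]
  have hDpos : 0 < √(1 + t ^ 2) * (√(1 + k ^ 2 * t ^ 2) + k * √(1 + t ^ 2)) := by positivity
  rw [integrand, norm_div, Real.norm_eq_abs, Real.norm_eq_abs, abs_of_pos hDpos,
    ← div_eq_mul_inv, div_div]
  exact div_le_div_of_nonneg_left (abs_nonneg _) (by positivity) hD

lemma norm_tanPullback_le (hk : 0 < k) (t : ℝ) :
    ‖tanPullback k t‖ ≤ |1 - k ^ 2| / k * (1 + t ^ 2)⁻¹ := by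
  have hD : k * t ^ 2 ≤ √(1 + t ^ 2) * √(1 + k ^ 2 * t ^ 2) := by
    rw [← sqrt_mul (by positivity), le_sqrt (by positivity) (by positivity)]
    nlinarith [sq_nonneg t, sq_nonneg k, sq_nonneg (k * t)]
  have hDpos : 0 < (1 + t ^ 2) * √(1 + t ^ 2) * √(1 + k ^ 2 * t ^ 2) := by positivity
  rw [tanPullback, norm_div, Real.norm_eq_abs, Real.norm_eq_abs, abs_mul, abs_of_nonneg
    (sq_nonneg t), abs_of_pos hDpos, ← div_eq_mul_inv, div_div,
    div_le_div_iff₀ (by positivity) (by positivity)]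
  nlinarith [mul_le_mul_of_nonneg_left hD (by positivity : 0 ≤ |1 - k ^ 2| * (1 + t ^ 2))]

lemma integrable_integrand (hk : 0 < k) : Integrable (integrand k) :=
  (integrable_inv_one_add_sq.const_mul _).mono' (continuous_integrand hk.le).aestronglyMeasurable
    (ae_of_all _ (norm_integrand_le hk))

lemma integrable_tanPullback (hk : 0 < k) : Integrable (tanPullback k) :=
  (integrable_inv_one_add_sq.const_mul _).mono' continuous_tanPullback.aestronglyMeasurable
    (ae_of_all _ (norm_tanPullback_le hk))

lemma tendsto_mul_integrand_atTop (hk : 0 < k) :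
    Tendsto (fun t => t * integrand k t) atTop (𝓝 0) := by
  have hlim : Tendsto (fun t : ℝ => |1 - k ^ 2| / k / t) atTop (𝓝 0) :=
    tendsto_const_nhds.div_atTop tendsto_id
  refine squeeze_zero_norm' ?_ hlim
  filter_upwards [Ioi_mem_atTop 0] with t (ht : 0 < t)
  calc ‖t * integrand k t‖ ≤ t * (|1 - k ^ 2| / k * (1 + t ^ 2)⁻¹) := by
        rw [norm_mul, norm_of_nonneg ht.le]
        exact mul_le_mul_of_nonneg_left (norm_integrand_le hk t) ht.le
    _ ≤ |1 - k ^ 2| / k / t := by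
        rw [le_div_iff₀ ht, show t * (|1 - k ^ 2| / k * (1 + t ^ 2)⁻¹) * t
          = |1 - k ^ 2| / k * (t ^ 2 / (1 + t ^ 2)) by ring]
        exact mul_le_of_le_one_right (by positivity)
          ((div_le_one (by positivity)).mpr (by linarith))

lemma integral_integrand_eq_integral_tanPullback (hk : 0 < k) :
    ∫ t in Ioi 0, integrand k t = ∫ t in Ioi 0, tanPullback k t := by
  have hderiv (t : ℝ) :
      HasDerivAt (fun t => t * integrand k t) (integrand k t - tanPullback k t) t := by
    simp_rw [integrand_eq_sqrt_div_sqrt_sub hk.le]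
    refine ((hasDerivAt_id t).mul ((hasDerivAt_sqrt_div_sqrt t).sub_const k)).congr_deriv ?_
    rw [tanPullback, id]
    ring
  have h := integral_Ioi_of_hasDerivAt_of_tendsto' (a := 0) (fun t _ => hderiv t)
    ((integrable_integrand hk).sub (integrable_tanPullback hk)).integrableOn
    (tendsto_mul_integrand_atTop hk)
  rw [integral_sub (integrable_integrand hk).integrableOn (integrable_tanPullback hk).integrableOn,
    zero_mul, sub_zero] at h
  exact sub_eq_zero.mp h

end

theorem stmt_3 (k : ℝ) (hk : k ∈ Set.Ioo (0:ℝ) 1) :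
    IntegrableOn
      (fun t : ℝ => (1 - k^2) /
        (Real.sqrt (1 + t^2) * (Real.sqrt (1 + k^2 * t^2) + k * Real.sqrt (1 + t^2))))
      (Set.Ioi 0) volume ∧
    ∫ t in Set.Ioi (0:ℝ),
        (1 - k^2) /
          (Real.sqrt (1 + t^2) * (Real.sqrt (1 + k^2 * t^2) + k * Real.sqrt (1 + t^2)))
      = ellK' k - ellE' k := by
  obtain ⟨hk0, hk1⟩ := hk
  have hm : √(1 - k ^ 2) ^ 2 = 1 - k ^ 2 := sq_sqrt (by nlinarith)
  refine ⟨(integrable_integrand hk0).integrableOn, ?_⟩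
  calc ∫ t in Ioi 0, integrand k t
      = ∫ t in Ioi 0, tanPullback k t := integral_integrand_eq_integral_tanPullback hk0
    _ = ∫ θ in (0:ℝ)..(π / 2), ellKSubEIntegrand √(1 - k ^ 2) θ := by
        simp_rw [← ellKSubEIntegrand_arctan_div_one_add_sq _ hm,
          integral_comp_arctan_div_one_add_sq]
    _ = ellK' k - ellE' k := (ellK_sub_ellE (by rw [hm]; nlinarith)).symm
end

section
/- For every k ∈ (0,1) and every x ∈ ℝ, the incomplete integrals satisfy the strict bounds |𝔉_k(x)| < K'(k) and |𝔈_k(x)| < K'(k) − E'(k). -/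
open Real

/-- Incomplete integral 𝔉_k. -/
noncomputable def incF (k x : ℝ) : ℝ :=
  ∫ t in (0:ℝ)..x, 1 / Real.sqrt ((1 + t^2) * (1 + k^2 * t^2))

/-- Incomplete integral 𝔈_k. -/
noncomputable def incE (k x : ℝ) : ℝ :=
  ∫ t in (0:ℝ)..x,
    (1 - k^2) / (Real.sqrt (1 + t^2) * (Real.sqrt (1 + k^2 * t^2) + k * Real.sqrt (1 + t^2)))


/-!
Substituting `t = tan θ` turns `𝔉_k(x)` and `𝔈_k(x)` into integrals over `[0, arctan x]` of the
even positive functions `1 / Δ'` and `(1 - k²) / (Δ' + k)`, where `Δ'(θ) = √(cos² θ + k² sin² θ)`.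
Over `[0, π/2]` the first gives `K'`; the second gives `K' - E' = ∫ (1 - k²) sin² θ / Δ'` after
integrating by parts against `(1 - k²) sin θ cos θ / (Δ' + k)`, which vanishes at both ends.
Since `|arctan x| < π/2`, both bounds are strict.
-/

open intervalIntegral

theorem abs_integral_zero_eq_integral_zero_abs_of_even {g : ℝ → ℝ} (hg : ∀ θ, 0 ≤ g θ)
    (heven : g.Even) (a : ℝ) :
    |∫ θ in (0:ℝ)..a, g θ| = ∫ θ in (0:ℝ)..|a|, g θ := by
  rcases le_or_gt 0 a with ha | ha
  · rw [abs_of_nonneg ha, abs_of_nonneg (integral_nonneg ha fun θ _ ↦ hg θ)]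
  · have hreflect : ∫ θ in (0:ℝ)..a, g θ = -∫ θ in (0:ℝ)..(-a), g θ := by
      have := integral_comp_neg (a := 0) (b := -a) g
      simp only [heven _, neg_zero, neg_neg] at this
      rw [this, integral_symm]
    rw [hreflect, abs_neg, abs_of_neg ha,
      abs_of_nonneg (integral_nonneg (by linarith) fun θ _ ↦ hg θ)]

theorem integral_lt_integral_of_lt_of_pos {g : ℝ → ℝ} (hg : Continuous g) (hpos : ∀ θ, 0 < g θ)
    (a : ℝ) {b c : ℝ} (hbc : b < c) :
    ∫ θ in a..b, g θ < ∫ θ in a..c, g θ := by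
  rw [← integral_add_adjacent_intervals (hg.intervalIntegrable a b) (hg.intervalIntegrable b c)]
  linarith [intervalIntegral_pos_of_pos_on (hg.intervalIntegrable b c) (fun θ _ ↦ hpos θ) hbc]

theorem abs_integral_zero_arctan_lt {g : ℝ → ℝ} (hg : Continuous g) (hpos : ∀ θ, 0 < g θ)
    (heven : g.Even) (x : ℝ) :
    |∫ θ in (0:ℝ)..arctan x, g θ| < ∫ θ in (0:ℝ)..(π / 2), g θ := by
  rw [abs_integral_zero_eq_integral_zero_abs_of_even (fun θ ↦ (hpos θ).le) heven]
  exact integral_lt_integral_of_lt_of_pos hg hpos 0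
    (abs_lt.mpr ⟨neg_pi_div_two_lt_arctan x, arctan_lt_pi_div_two x⟩)

theorem cos_pos_of_mem_uIcc_arctan {a b θ : ℝ} (hθ : θ ∈ Set.uIcc (arctan a) (arctan b)) :
    0 < cos θ := by
  refine cos_pos_of_mem_Ioo (Set.ordConnected_Ioo.uIcc_subset ?_ ?_ hθ) <;>
    exact ⟨neg_pi_div_two_lt_arctan _, arctan_lt_pi_div_two _⟩

theorem integral_eq_integral_arctan {f : ℝ → ℝ} (hf : Continuous f) (a b : ℝ) :
    ∫ t in a..b, f t = ∫ θ in arctan a..arctan b, 1 / cos θ ^ 2 * f (tan θ) := by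
  have hsubst := integral_deriv_smul_comp (a := arctan a) (b := arctan b) (f := tan)
    (f' := fun θ ↦ 1 / cos θ ^ 2) (g := f)
    (fun θ hθ ↦ hasDerivAt_tan (cos_pos_of_mem_uIcc_arctan hθ).ne')
    (continuousOn_const.div (by fun_prop) fun θ hθ ↦ (pow_pos (cos_pos_of_mem_uIcc_arctan hθ) 2).ne')
    hf
  rw [tan_arctan, tan_arctan] at hsubst
  simpa using hsubst.symm

/-- `Δ'(θ) = √(1 - k'² sin² θ)`, the integrand of `K'` and `E'`, written without `k'`. -/
noncomputable def ellDelta' (k θ : ℝ) : ℝ := √(cos θ ^ 2 + k ^ 2 * sin θ ^ 2)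

section Elliptic

variable {k : ℝ}

theorem ellDelta'_sq (k θ : ℝ) : ellDelta' k θ ^ 2 = cos θ ^ 2 + k ^ 2 * sin θ ^ 2 :=
  sq_sqrt (by positivity)

theorem ellDelta'_pos (hk : k ≠ 0) (θ : ℝ) : 0 < ellDelta' k θ := by
  refine sqrt_pos.mpr ?_
  rcases eq_or_ne (cos θ) 0 with hcos | hcos
  · have hsin : sin θ ^ 2 = 1 := by nlinarith [sin_sq_add_cos_sq θ]
    simp only [hcos, hsin]
    positivity
  · positivity

theorem continuous_ellDelta' (k : ℝ) : Continuous (ellDelta' k) := by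
  unfold ellDelta'; fun_prop

theorem ellDelta'_neg (k θ : ℝ) : ellDelta' k (-θ) = ellDelta' k θ := by
  simp [ellDelta']

theorem ellDelta'_one (θ : ℝ) : ellDelta' 1 θ = 1 := by
  simp [ellDelta', cos_sq_add_sin_sq]

theorem continuous_one_div_ellDelta' (hk : k ≠ 0) : Continuous fun θ ↦ 1 / ellDelta' k θ :=
  continuous_const.div (continuous_ellDelta' k) fun θ ↦ (ellDelta'_pos hk θ).ne'

theorem continuous_div_ellDelta'_add (hk : 0 < k) (c : ℝ) :
    Continuous fun θ ↦ c / (ellDelta' k θ + k) :=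
  continuous_const.div ((continuous_ellDelta' k).add continuous_const) fun θ ↦
    (add_pos (ellDelta'_pos hk.ne' θ) hk).ne'

theorem sqrt_one_add_sq_mul_tan_sq {θ : ℝ} (hθ : 0 < cos θ) (k : ℝ) :
    √(1 + k ^ 2 * tan θ ^ 2) = ellDelta' k θ / cos θ := by
  rw [sqrt_eq_iff_eq_sq (y := ellDelta' k θ / cos θ) (by positivity)
    (div_nonneg (sqrt_nonneg _) hθ.le), div_pow, ellDelta'_sq, tan_eq_sin_div_cos]
  field_simp

theorem sqrt_one_add_tan_sq {θ : ℝ} (hθ : 0 < cos θ) : √(1 + tan θ ^ 2) = 1 / cos θ := by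
  simpa [ellDelta'_one] using sqrt_one_add_sq_mul_tan_sq hθ 1

theorem hasDerivAt_ellDelta' (hk : k ≠ 0) (θ : ℝ) :
    HasDerivAt (ellDelta' k) ((k ^ 2 - 1) * sin θ * cos θ / ellDelta' k θ) θ := by
  have hinner : HasDerivAt (fun θ ↦ cos θ ^ 2 + k ^ 2 * sin θ ^ 2)
      (2 * (k ^ 2 - 1) * sin θ * cos θ) θ := by
    refine (((hasDerivAt_cos θ).pow 2).add
      (((hasDerivAt_sin θ).pow 2).const_mul (k ^ 2))).congr_deriv ?_
    push_cast
    ring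
  refine (hinner.sqrt ?_).congr_deriv ?_
  · rw [← ellDelta'_sq]; exact (pow_pos (ellDelta'_pos hk θ) 2).ne'
  · rw [ellDelta']
    field_simp

theorem ellDelta'_eq_sqrt (hk : k ^ 2 ≤ 1) (θ : ℝ) :
    ellDelta' k θ = √(1 - √(1 - k ^ 2) ^ 2 * sin θ ^ 2) := by
  rw [ellDelta', sq_sqrt (by linarith)]
  congr 1
  linear_combination sin_sq_add_cos_sq θ

theorem ellK'_eq_integral (hk : k ^ 2 ≤ 1) :
    ellK' k = ∫ θ in (0:ℝ)..(π / 2), 1 / ellDelta' k θ := by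
  simp only [ellK', ellK, ellDelta'_eq_sqrt hk]

theorem ellE'_eq_integral (hk : k ^ 2 ≤ 1) :
    ellE' k = ∫ θ in (0:ℝ)..(π / 2), ellDelta' k θ := by
  simp only [ellE', ellE, ellDelta'_eq_sqrt hk]

theorem hasDerivAt_sin_mul_cos_div_ellDelta'_add (hk : 0 < k) (θ : ℝ) :
    HasDerivAt (fun θ ↦ (1 - k ^ 2) * (sin θ * cos θ) / (ellDelta' k θ + k))
      ((1 - k ^ 2) / (ellDelta' k θ + k) - (1 / ellDelta' k θ - ellDelta' k θ)) θ := by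
  have hΔ := ellDelta'_pos hk.ne' θ
  refine ((((hasDerivAt_sin θ).fun_mul (hasDerivAt_cos θ)).const_mul (1 - k ^ 2)).fun_div
    ((hasDerivAt_ellDelta' hk.ne' θ).add_const k) (by positivity)).congr_deriv ?_
  have hsq := ellDelta'_sq k θ
  rw [cos_sq'] at hsq
  field_simp
  rw [cos_sq']
  linear_combination (-(1 - k ^ 2) * sin θ ^ 2 - (ellDelta' k θ + k) ^ 2) * hsq

theorem ellK'_sub_ellE'_eq_integral (hk : 0 < k) (hk1 : k ^ 2 ≤ 1) :
    ellK' k - ellE' k = ∫ θ in (0:ℝ)..(π / 2), (1 - k ^ 2) / (ellDelta' k θ + k) := by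
  have hΔ := continuous_ellDelta' k
  have hK := continuous_one_div_ellDelta' hk.ne'
  have hE := continuous_div_ellDelta'_add hk (1 - k ^ 2)
  have hKE : Continuous fun θ ↦ 1 / ellDelta' k θ - ellDelta' k θ := hK.sub hΔ
  have hibp := integral_eq_sub_of_hasDerivAt (a := 0) (b := π / 2)
    (fun θ _ ↦ hasDerivAt_sin_mul_cos_div_ellDelta'_add hk θ)
    ((hE.sub hKE).intervalIntegrable _ _)
  rw [integral_sub (hE.intervalIntegrable _ _) (hKE.intervalIntegrable _ _),
    integral_sub (hK.intervalIntegrable _ _) (hΔ.intervalIntegrable _ _)] at hibp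
  simp only [cos_pi_div_two, sin_zero, mul_zero, zero_mul, zero_div, sub_zero] at hibp
  rw [ellK'_eq_integral hk1, ellE'_eq_integral hk1]
  linarith

theorem incF_eq_integral_arctan (k x : ℝ) :
    incF k x = ∫ θ in (0:ℝ)..arctan x, 1 / ellDelta' k θ := by
  rw [incF, integral_eq_integral_arctan (by fun_prop (disch := intros; positivity)), arctan_zero]
  refine integral_congr fun θ hθ ↦ ?_
  have hcos := cos_pos_of_mem_uIcc_arctan (arctan_zero ▸ hθ)
  simp only [sqrt_mul (by positivity : (0:ℝ) ≤ 1 + tan θ ^ 2), sqrt_one_add_tan_sq hcos,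
    sqrt_one_add_sq_mul_tan_sq hcos]
  field_simp

theorem incE_eq_integral_arctan (hk : 0 < k) (x : ℝ) :
    incE k x = ∫ θ in (0:ℝ)..arctan x, (1 - k ^ 2) / (ellDelta' k θ + k) := by
  rw [incE, integral_eq_integral_arctan (by fun_prop (disch := intros; positivity)), arctan_zero]
  refine integral_congr fun θ hθ ↦ ?_
  have hcos := cos_pos_of_mem_uIcc_arctan (arctan_zero ▸ hθ)
  have hΔ := ellDelta'_pos hk.ne' θ
  simp only [sqrt_one_add_tan_sq hcos, sqrt_one_add_sq_mul_tan_sq hcos]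
  field_simp

end Elliptic

theorem stmt_4 (k : ℝ) (hk : k ∈ Set.Ioo (0:ℝ) 1) (x : ℝ) :
    |incF k x| < ellK' k ∧ |incE k x| < ellK' k - ellE' k := by
  obtain ⟨hk0, hk1⟩ := hk
  have hk2 : k ^ 2 < 1 := by nlinarith
  have hΔpos := ellDelta'_pos hk0.ne'
  constructor
  · rw [incF_eq_integral_arctan, ellK'_eq_integral hk2.le]
    exact abs_integral_zero_arctan_lt (continuous_one_div_ellDelta' hk0.ne')
      (fun θ ↦ one_div_pos.mpr (hΔpos θ)) (fun θ ↦ by simp only [ellDelta'_neg]) x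
  · rw [incE_eq_integral_arctan hk0, ellK'_sub_ellE'_eq_integral hk0 hk2.le]
    exact abs_integral_zero_arctan_lt (continuous_div_ellDelta'_add hk0 _)
      (fun θ ↦ div_pos (by linarith) (add_pos (hΔpos θ) hk0)) (fun θ ↦ by simp only [ellDelta'_neg]) x
end

section
/- For every fixed p > 0 and k ∈ (0,1), the function (u,v) ↦ T₀(p,k,u,v), defined on the set of pairs of real numbers with u ≠ v, is surjective onto ℝ; that is, for every t ∈ ℝ there exist real numbers u ≠ v with T₀(p,k,u,v) = t. -/
open Real

/-- The function w_k(x) = √((1+x²)(1+k²x²)). -/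
noncomputable def wk (k x : ℝ) : ℝ := Real.sqrt ((1 + x^2) * (1 + k^2 * x^2))

/-- The function T₀. -/
noncomputable def T₀ (p k u v : ℝ) : ℝ :=
  (2/π) * ( p * (ellE k * incF k v - ellK k * incE k v)
    - (ellE k * incF k u - ellK k * incE k u)
    - ellK k * ( p * (wk k v / (u - v) + k * v) + (wk k u / (u - v) - k * u) ) )

open Filter Topology MeasureTheory

/-! Along the antidiagonal `(u, v) = (s, -s)` the odd functions `𝔉_k`, `𝔈_k` and the even `w_k`
collapse `T₀` to `(2/π)(p+1)(K·(k s - w_k(s)/(2s)) - (E·𝔉_k(s) - K·𝔈_k(s)))`. As `s → 0⁺` the pole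
`w_k(s)/(2s) ~ 1/(2s)` sends this to `-∞`. As `s → ∞` the integrals stay bounded, their integrands
being `O(1/(1+t²))`, while `k s - w_k(s)/(2s) ≥ k s/2 - 1/(2k)`, so it tends to `+∞`. The
intermediate value theorem along `s = exp x` gives every value. -/

lemma integral_zero_neg_of_even {f : ℝ → ℝ} (hf : ∀ x, f (-x) = f x) (s : ℝ) :
    ∫ x in (0:ℝ)..-s, f x = -∫ x in (0:ℝ)..s, f x := by
  have h := intervalIntegral.integral_comp_neg (a := 0) (b := s) f
  simp only [hf, neg_zero] at h
  rw [intervalIntegral.integral_symm, h]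

lemma integral_le_of_le_div_one_add_sq {f : ℝ → ℝ} {C s : ℝ}
    (hf : IntervalIntegrable f volume 0 s) (hC : 0 ≤ C) (hfC : ∀ t, f t ≤ C / (1 + t ^ 2))
    (hs : 0 ≤ s) : ∫ t in (0:ℝ)..s, f t ≤ C * (π / 2) :=
  calc ∫ t in (0:ℝ)..s, f t ≤ ∫ t in (0:ℝ)..s, C * (1 + t ^ 2)⁻¹ := by
        refine intervalIntegral.integral_mono_on hs hf ?_ fun t _ => hfC t
        exact (continuous_const.mul ((by fun_prop : Continuous fun t : ℝ => 1 + t ^ 2).inv₀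
          fun t => by positivity)).intervalIntegrable _ _
    _ = C * arctan s := by simp [integral_inv_one_add_sq]
    _ ≤ C * (π / 2) := mul_le_mul_of_nonneg_left (arctan_lt_pi_div_two s).le hC

section

variable {k : ℝ}

lemma ellK_pos (hk : k ^ 2 < 1) : 0 < ellK k := by
  have hrad : ∀ θ, 0 < 1 - k ^ 2 * sin θ ^ 2 := fun θ => by
    nlinarith [mul_nonneg (sq_nonneg k) (sub_nonneg.2 (sin_sq_le_one θ))]
  have hcont : Continuous fun θ => 1 / √(1 - k ^ 2 * sin θ ^ 2) :=
    continuous_const.div (by fun_prop) fun θ => (sqrt_pos.2 (hrad θ)).ne'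
  exact intervalIntegral.intervalIntegral_pos_of_pos_on (hcont.intervalIntegrable _ _)
    (fun θ _ => one_div_pos.2 (sqrt_pos.2 (hrad θ))) (by positivity)

lemma continuous_wk (k : ℝ) : Continuous (wk k) := by
  unfold wk
  fun_prop

lemma wk_zero (k : ℝ) : wk k 0 = 1 := by
  simp [wk]

lemma wk_neg (k s : ℝ) : wk k (-s) = wk k s := by
  rw [wk, wk, neg_sq]

lemma wk_le (hk0 : 0 < k) (hk1 : k ≤ 1) (s : ℝ) : wk k s ≤ k * s ^ 2 + k⁻¹ := by
  have hsq : (k * s ^ 2 + k⁻¹) ^ 2 = k ^ 2 * s ^ 4 + 2 * s ^ 2 + k⁻¹ ^ 2 := by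
    field_simp
    ring
  have hinv : 1 ≤ k⁻¹ ^ 2 := one_le_pow₀ ((one_le_inv₀ hk0).2 hk1)
  have hks : k ^ 2 * s ^ 2 ≤ s ^ 2 :=
    mul_le_of_le_one_left (sq_nonneg s) (pow_le_one₀ hk0.le hk1)
  refine sqrt_le_iff.2 ⟨by positivity, ?_⟩
  nlinarith

lemma continuous_incF (k : ℝ) : Continuous (incF k) :=
  intervalIntegral.continuous_primitive (fun _ _ =>
    (continuous_const.div (by fun_prop) fun t => by positivity).intervalIntegrable _ _) 0

lemma continuous_incE (hk : 0 ≤ k) : Continuous (incE k) :=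
  intervalIntegral.continuous_primitive (fun _ _ =>
    (continuous_const.div (by fun_prop) fun t => by positivity).intervalIntegrable _ _) 0

lemma incF_neg (k s : ℝ) : incF k (-s) = -incF k s :=
  integral_zero_neg_of_even (fun x => by rw [neg_sq]) s

lemma incE_neg (k s : ℝ) : incE k (-s) = -incE k s :=
  integral_zero_neg_of_even (fun x => by rw [neg_sq]) s

lemma incF_nonneg (k : ℝ) {s : ℝ} (hs : 0 ≤ s) : 0 ≤ incF k s :=
  intervalIntegral.integral_nonneg hs fun t _ => by positivity

lemma incE_nonneg (hk0 : 0 ≤ k) (hk1 : k ≤ 1) {s : ℝ} (hs : 0 ≤ s) : 0 ≤ incE k s := by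
  have : 0 ≤ 1 - k ^ 2 := by nlinarith
  exact intervalIntegral.integral_nonneg hs fun t _ => by positivity

lemma incF_le (hk0 : 0 < k) (hk1 : k ≤ 1) {s : ℝ} (hs : 0 ≤ s) : incF k s ≤ k⁻¹ * (π / 2) := by
  refine integral_le_of_le_div_one_add_sq
    ((continuous_const.div (by fun_prop) fun t => by positivity).intervalIntegrable _ _)
    (by positivity) (fun t => ?_) hs
  have hroot : k * (1 + t ^ 2) ≤ √((1 + t ^ 2) * (1 + k ^ 2 * t ^ 2)) := by
    refine le_sqrt_of_sq_le ?_
    nlinarith [mul_le_mul_of_nonneg_left (pow_le_one₀ (n := 2) hk0.le hk1)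
      (by positivity : 0 ≤ 1 + t ^ 2)]
  calc 1 / √((1 + t ^ 2) * (1 + k ^ 2 * t ^ 2)) ≤ 1 / (k * (1 + t ^ 2)) :=
        one_div_le_one_div_of_le (by positivity) hroot
    _ = k⁻¹ / (1 + t ^ 2) := by rw [one_div, mul_inv, div_eq_mul_inv]

lemma T₀_self_neg (p k s : ℝ) :
    T₀ p k s (-s) = 2 / π * (p + 1) *
      (ellK k * (k * s - wk k s / (2 * s)) - (ellE k * incF k s - ellK k * incE k s)) := by
  rw [T₀, incF_neg, incE_neg, wk_neg, show s - -s = 2 * s by ring]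
  ring

variable {p : ℝ}

lemma continuousOn_T₀_self_neg (hk : 0 ≤ k) :
    ContinuousOn (fun s => T₀ p k s (-s)) {0}ᶜ := by
  have := continuous_incF k
  have := continuous_incE hk
  have := continuous_wk k
  simp_rw [T₀_self_neg]
  fun_prop (disch := intro s hs; simpa using hs)

lemma tendsto_T₀_self_neg_nhdsGT_zero (hp : -1 < p) (hk0 : 0 ≤ k) (hk1 : k < 1) :
    Tendsto (fun s => T₀ p k s (-s)) (𝓝[>] 0) atBot := by
  simp_rw [T₀_self_neg]
  refine Tendsto.const_mul_atBot (mul_pos (div_pos two_pos pi_pos) (by linarith)) ?_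
  have hK : 0 < ellK k := ellK_pos (by nlinarith)
  have hpole : Tendsto (fun s => wk k s / (2 * s)) (𝓝[>] 0) atTop := by
    have hw : Tendsto (fun s => wk k s / 2) (𝓝[>] 0) (𝓝 (1 / 2)) := by
      have := ((continuous_wk k).div_const 2).tendsto 0
      rw [wk_zero] at this
      exact this.mono_left nhdsWithin_le_nhds
    exact (hw.pos_mul_atTop (by norm_num) tendsto_inv_nhdsGT_zero).congr fun s => by ring
  have hreg : Continuous fun s => ellK k * k * s - (ellE k * incF k s - ellK k * incE k s) := by
    have := continuous_incF k
    have := continuous_incE hk0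
    fun_prop
  refine (((hreg.tendsto 0).mono_left nhdsWithin_le_nhds).add_atBot
    (tendsto_neg_atTop_atBot.comp (hpole.const_mul_atTop hK))).congr fun s => ?_
  simp only [Function.comp_apply]
  ring

lemma tendsto_T₀_self_neg_atTop (hp : -1 < p) (hk0 : 0 < k) (hk1 : k < 1) :
    Tendsto (fun s => T₀ p k s (-s)) atTop atTop := by
  simp_rw [T₀_self_neg]
  refine Tendsto.const_mul_atTop (mul_pos (div_pos two_pos pi_pos) (by linarith)) ?_
  have hK : 0 < ellK k := ellK_pos (by nlinarith)
  refine tendsto_atTop_mono' _ ?_ (tendsto_atTop_add_const_right _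
    (-(ellK k / (2 * k)) - |ellE k| * (k⁻¹ * (π / 2)))
    (tendsto_id.const_mul_atTop (by positivity : 0 < ellK k * k / 2)))
  filter_upwards [eventually_ge_atTop 1] with s hs
  have hs0 : 0 ≤ s := zero_le_one.trans hs
  have hw : wk k s / (2 * s) ≤ k * s / 2 + 1 / (2 * k) := by
    have hexp : (k * s / 2 + 1 / (2 * k)) * (2 * s) = k * s ^ 2 + s * k⁻¹ := by
      field_simp
    rw [div_le_iff₀ (by positivity), hexp]
    linarith [wk_le hk0 hk1.le s, le_mul_of_one_le_left (inv_nonneg.2 hk0.le) hs]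
  have hD : ellE k * incF k s ≤ |ellE k| * (k⁻¹ * (π / 2)) :=
    (mul_le_mul_of_nonneg_right (le_abs_self _) (incF_nonneg k hs0)).trans
      (mul_le_mul_of_nonneg_left (incF_le hk0 hk1.le hs0) (abs_nonneg _))
  have hE := mul_nonneg hK.le (incE_nonneg hk0.le hk1.le hs0)
  have hKw := mul_le_mul_of_nonneg_left hw hK.le
  simp only [id]
  linear_combination hKw + hD + hE

end

theorem stmt_6 (p k : ℝ) (hp : 0 < p) (hk : k ∈ Set.Ioo (0:ℝ) 1) (t : ℝ) :
    ∃ u v : ℝ, u ≠ v ∧ T₀ p k u v = t := by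
  obtain ⟨hk0, hk1⟩ := hk
  have hp' : -1 < p := by linarith
  have hcont : Continuous fun x => T₀ p k (exp x) (-exp x) :=
    (continuousOn_T₀_self_neg hk0.le).comp_continuous continuous_exp fun x => exp_ne_zero x
  obtain ⟨x, hx⟩ := hcont.surjective
    ((tendsto_T₀_self_neg_atTop hp' hk0 hk1).comp tendsto_exp_atTop)
    ((tendsto_T₀_self_neg_nhdsGT_zero hp' hk0.le hk1).comp tendsto_exp_atBot_nhdsGT) t
  exact ⟨exp x, -exp x, by linarith [exp_pos x], hx⟩
end

section
/- Fix x > 0 and δ ∈ (0,π), and let κ₁ = (π/4)·(1 − i/x) and κ₂ = −(π/4)·(1 + i/x). Then for every w ∈ ℂ, g(w) equals the identity matrix if and only if w = a·κ₁ + b·κ₂ for some integers a and b; that is, the lattice of periods of g is exactly ℤκ₁ + ℤκ₂. -/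
open Complex Real Matrix

/-- The matrix X. -/
noncomputable def matX : Matrix (Fin 2) (Fin 2) ℂ := !![0, 1; -1, 0]

/-- The matrix Y with parameters x, δ. -/
noncomputable def matY (x δ : ℝ) : Matrix (Fin 2) (Fin 2) ℂ :=
  (x : ℂ) • !![0, Complex.exp (Complex.I * δ); -Complex.exp (-(Complex.I * δ)), 0]

/-- The homogeneous harmonic map g. -/
noncomputable def gmap (x δ : ℝ) (w : ℂ) : Matrix (Fin 2) (Fin 2) ℂ :=
  NormedSpace.exp ((((-4) * w.re : ℝ) : ℂ) • matX) *
    NormedSpace.exp (((4 * w.im : ℝ) : ℂ) • matY x δ)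

/-
Since `matX ^ 2 = -1` and `matY x δ = x • M` with `M ^ 2 = -1`, both exponentials are of the form
`cos t • 1 + sin t • A`, so `g w` is a product of two explicit trigonometric matrices in
`u = -4 Re w` and `v = 4 x Im w`. As `exp (iδ) ≠ exp (-iδ)` for `0 < δ < π`, comparing entries shows
`g w = 1` iff `sin u = sin v = 0` and `cos u cos v = 1`, i.e. iff `u + v` and `u - v` lie in `2πℤ`.
Writing `u + v = -2πa` and `u - v = 2πb` is exactly `w = a κ₁ + b κ₂`.
-/

theorem NormedSpace.exp_smul_of_mul_self_eq_neg_one {𝔸 : Type*} [Ring 𝔸] [Algebra ℂ 𝔸]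
    [TopologicalSpace 𝔸] [IsTopologicalRing 𝔸] [ContinuousSMul ℂ 𝔸] [T2Space 𝔸]
    {A : 𝔸} (hA : A * A = -1) (c : ℂ) :
    NormedSpace.exp (c • A) = Complex.cos c • 1 + Complex.sin c • A := by
  have hA_even (k : ℕ) : A ^ (2 * k) = (-1 : ℂ) ^ k • 1 := by
    rw [pow_mul, sq, hA, ← neg_one_smul ℂ (1 : 𝔸), smul_pow, one_pow]
  rw [NormedSpace.exp_eq_tsum ℂ]
  refine HasSum.tsum_eq (HasSum.even_add_odd ?_ ?_)
  · convert (Complex.hasSum_cos c).smul_const (1 : 𝔸) using 2 with k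
    rw [smul_pow, hA_even, smul_smul, smul_smul]
    field_simp
  · convert (Complex.hasSum_sin c).smul_const A using 2 with k
    rw [smul_pow, pow_succ A, hA_even, smul_mul_assoc, one_mul, smul_smul, smul_smul]
    field_simp

theorem Matrix.exp_smul_antidiagonal {p q : ℂ} (hpq : p * q = 1) (c : ℂ) :
    NormedSpace.exp (c • !![0, p; -q, 0]) =
      !![Complex.cos c, Complex.sin c * p; -(Complex.sin c * q), Complex.cos c] := by
  have hsq : !![0, p; -q, 0] * !![0, p; -q, 0] = -1 := by
    ext i j; fin_cases i <;> fin_cases j <;> simp [hpq, mul_comm q p]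
  rw [NormedSpace.exp_smul_of_mul_self_eq_neg_one hsq, one_fin_two]
  ext i j; fin_cases i <;> fin_cases j <;> simp

theorem gmap_eq_matrix_mul (x δ : ℝ) (w : ℂ) :
    gmap x δ w =
      !![Complex.cos ↑(-4 * w.re), Complex.sin ↑(-4 * w.re);
        -Complex.sin ↑(-4 * w.re), Complex.cos ↑(-4 * w.re)] *
      !![Complex.cos ↑(4 * w.im * x), Complex.sin ↑(4 * w.im * x) * Complex.exp (Complex.I * δ);
        -(Complex.sin ↑(4 * w.im * x) * Complex.exp (-(Complex.I * δ))),
          Complex.cos ↑(4 * w.im * x)] := by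
  have hE : Complex.exp (Complex.I * δ) * Complex.exp (-(Complex.I * δ)) = 1 := by
    rw [← Complex.exp_add, add_neg_cancel, Complex.exp_zero]
  rw [gmap, matY, smul_smul, ← ofReal_mul, matX,
    Matrix.exp_smul_antidiagonal (mul_one 1), Matrix.exp_smul_antidiagonal hE]
  simp

theorem Complex.exp_I_mul_ne_exp_neg_I_mul {δ : ℝ} (hδ : δ ∈ Set.Ioo 0 π) :
    Complex.exp (Complex.I * δ) ≠ Complex.exp (-(Complex.I * δ)) := by
  intro h
  have : Complex.sin δ = 0 := by
    rw [Complex.sin, neg_mul, mul_comm (δ : ℂ) I, h, sub_self, zero_mul, zero_div]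
  exact (Real.sin_pos_of_pos_of_lt_pi hδ.1 hδ.2).ne' (mod_cast this)

theorem cos_sin_matrix_mul_eq_one_iff {u v E F : ℂ} (hEF : E ≠ F) :
    !![Complex.cos u, Complex.sin u; -Complex.sin u, Complex.cos u] *
        !![Complex.cos v, Complex.sin v * E; -(Complex.sin v * F), Complex.cos v] = 1 ↔
      Complex.sin u = 0 ∧ Complex.sin v = 0 ∧ Complex.cos u * Complex.cos v = 1 := by
  rw [mul_fin_two, one_fin_two, EmbeddingLike.apply_eq_iff_eq]
  simp only [Matrix.vecCons_inj, and_true]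
  constructor
  · rintro ⟨⟨h00, h01⟩, h10, h11⟩
    have hEF' : E - F ≠ 0 := sub_ne_zero.mpr hEF
    have hsv : Complex.sin v = 0 := by
      have hc : Complex.cos u * Complex.sin v = 0 := by
        apply (mul_eq_zero.mp _).resolve_right hEF'
        linear_combination h01 + h10
      have hs : Complex.sin u * Complex.sin v = 0 := by
        apply (mul_eq_zero.mp _).resolve_right hEF'
        linear_combination h00 - h11
      linear_combination Complex.cos u * hc + Complex.sin u * hs -
        Complex.sin v * Complex.sin_sq_add_cos_sq u
    have hcc : Complex.cos u * Complex.cos v = 1 := by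
      linear_combination h00 + Complex.sin u * F * hsv
    refine ⟨?_, hsv, hcc⟩
    linear_combination -Complex.sin u * hcc +
      Complex.cos u * (h01 - Complex.cos u * E * hsv)
  · rintro ⟨hsu, hsv, hcc⟩
    simp [hsu, hsv, hcc]

theorem Complex.sin_eq_zero_and_cos_mul_cos_eq_one_iff {u v : ℂ} :
    Complex.sin u = 0 ∧ Complex.sin v = 0 ∧ Complex.cos u * Complex.cos v = 1 ↔
      Complex.cos (u + v) = 1 ∧ Complex.cos (u - v) = 1 := by
  rw [Complex.cos_add, Complex.cos_sub]
  constructor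
  · rintro ⟨hsu, hsv, hcc⟩
    simp [hsu, hsv, hcc]
  · rintro ⟨hadd, hsub⟩
    have hcc : Complex.cos u * Complex.cos v = 1 := by linear_combination (hadd + hsub) / 2
    have hss : Complex.sin u * Complex.sin v = 0 := by linear_combination (hsub - hadd) / 2
    have sin_eq_zero_of {a b : ℂ} (ha : Complex.sin a = 0) (hab : Complex.cos a * Complex.cos b = 1) :
        Complex.sin b = 0 := by
      linear_combination (exp := 2) Complex.sin_sq_add_cos_sq b +
        Complex.cos b ^ 2 * Complex.sin_sq_add_cos_sq a - Complex.cos b ^ 2 * Complex.sin a * ha -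
        (Complex.cos a * Complex.cos b + 1) * hab
    rcases mul_eq_zero.mp hss with hsu | hsv
    · exact ⟨hsu, sin_eq_zero_of hsu hcc, hcc⟩
    · exact ⟨sin_eq_zero_of hsv (by rwa [mul_comm]), hsv, hcc⟩

theorem eq_lattice_point_iff {x : ℝ} (hx : x ≠ 0) (w : ℂ) (a b : ℤ) :
    w = (a : ℂ) * ((π/4 : ℝ) * (1 - Complex.I / x))
        + (b : ℂ) * (-((π/4 : ℝ) * (1 + Complex.I / x))) ↔
      -(a : ℝ) * (2 * π) = -4 * w.re + 4 * w.im * x ∧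
        (b : ℝ) * (2 * π) = -4 * w.re - 4 * w.im * x := by
  rw [Complex.ext_iff]
  simp only [ofReal_div, ofReal_ofNat, mul_neg, add_re, mul_re, intCast_re, div_ofNat_re, ofReal_re,
    sub_re, one_re, div_re, I_re, zero_mul, normSq_ofReal, zero_div, I_im, ofReal_im, mul_zero,
    add_zero, sub_zero, mul_one, div_ofNat_im, sub_im, one_im, div_im, one_mul,
    div_self_mul_self', zero_sub, neg_zero, intCast_im, mul_im, neg_re, add_im, zero_add, neg_im,
    neg_mul]
  field_simp
  constructor <;> rintro ⟨h1, h2⟩ <;> constructor <;> linarith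

theorem stmt_14 (x δ : ℝ) (hx : 0 < x) (hδ : δ ∈ Set.Ioo (0:ℝ) π) :
    ∀ w : ℂ, gmap x δ w = 1 ↔
      ∃ a b : ℤ, w = (a : ℂ) * ((π/4 : ℝ) * (1 - Complex.I / x))
        + (b : ℂ) * (-((π/4 : ℝ) * (1 + Complex.I / x))) := by
  intro w
  rw [gmap_eq_matrix_mul, cos_sin_matrix_mul_eq_one_iff (Complex.exp_I_mul_ne_exp_neg_I_mul hδ),
    Complex.sin_eq_zero_and_cos_mul_cos_eq_one_iff, Complex.cos_eq_one_iff, Complex.cos_eq_one_iff]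
  simp_rw [eq_lattice_point_iff hx.ne']
  constructor
  · rintro ⟨⟨n, hn⟩, m, hm⟩
    exact ⟨-n, m, by rw [Int.cast_neg, neg_neg]; exact_mod_cast hn, by exact_mod_cast hm⟩
  · rintro ⟨a, b, ha, hb⟩
    exact ⟨⟨-a, by exact_mod_cast ha⟩, b, by exact_mod_cast hb⟩
end

section
/- Let a, b, c be real numbers, not all zero, let Z be the 2×2 complex matrix !![i·a, b + i·c; −b + i·c, −i·a], and let r = √(a² + b² + c²). Then the matrix exponential satisfies exp(Z) = cos(r)·1 + (sin(r)/r)·Z, where 1 is the 2×2 identity matrix. -/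
/-!
If `J * J = -1` in a real normed algebra, then `z ↦ re z • 1 + im z • J` is a continuous
algebra map `ℂ → A`, and it commutes with `exp`; so Euler's formula `exp (t i) = cos t + i sin t`
transports to `exp (t • J) = cos t • 1 + sin t • J`. The matrix `Z` squares to
`-(a² + b² + c²) • 1`, hence `Z = r • J` with `J = r⁻¹ • Z` and `J * J = -1`.
-/

open Complex Matrix

section

variable {A : Type*} [NormedRing A] [NormedAlgebra ℝ A]

theorem exp_smul_of_mul_self_eq_neg_one {J : A} (hJ : J * J = -1) (t : ℝ) :
    NormedSpace.exp (t • J) = Real.cos t • 1 + Real.sin t • J := by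
  -- `NormedSpace.map_exp` asks for some `ℚ`-algebra structure on `A`; any one will do.
  let _ : Algebra ℚ A := Algebra.compHom A (algebraMap ℚ ℝ)
  let φ := liftAux J hJ
  have hφ : ∀ x y : ℝ, φ (x + y * I) = x • 1 + y • J := fun x y => by
    simp [φ, liftAux_apply, Algebra.algebraMap_eq_smul_one]
  calc NormedSpace.exp (t • J) = NormedSpace.exp (φ (t * I)) := by
        simpa using congrArg NormedSpace.exp (hφ 0 t).symm
    _ = φ (exp (t * I)) := by
        rw [exp_eq_exp_ℂ, NormedSpace.map_exp φ φ.toLinearMap.continuous_of_finiteDimensional]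
    _ = Real.cos t • 1 + Real.sin t • J := by
        rw [← hφ, exp_mul_I, ← ofReal_cos, ← ofReal_sin]

theorem exp_eq_cos_smul_one_add_sin_div_smul {Z : A} {r : ℝ} (hr : r ≠ 0)
    (hZ : Z * Z = -(r ^ 2 • 1)) :
    NormedSpace.exp Z = Real.cos r • 1 + (Real.sin r / r) • Z := by
  have hJ : (r⁻¹ • Z) * (r⁻¹ • Z) = -1 := by
    have hr2 : r⁻¹ * r⁻¹ * r ^ 2 = 1 := by field_simp
    rw [smul_mul_smul, hZ, smul_neg, smul_smul, hr2, one_smul]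
  have hZJ : Z = r • (r⁻¹ • Z) := by rw [smul_smul, mul_inv_cancel₀ hr, one_smul]
  rw [hZJ, exp_smul_of_mul_self_eq_neg_one hJ, ← hZJ, div_eq_mul_inv, mul_smul]

end

def su2Matrix (a b c : ℝ) : Matrix (Fin 2) (Fin 2) ℂ :=
  !![I * a, (b : ℂ) + I * c; -(b : ℂ) + I * c, -(I * a)]

theorem su2Matrix_mul_self (a b c : ℝ) :
    su2Matrix a b c * su2Matrix a b c = -((a ^ 2 + b ^ 2 + c ^ 2 : ℝ) • 1) := by
  ext i j
  fin_cases i <;> fin_cases j <;>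
    simp [su2Matrix, Matrix.mul_apply, Fin.sum_univ_succ] <;> ring_nf <;> simp only [I_sq] <;> ring

theorem stmt_15 (a b c : ℝ) (h : ¬(a = 0 ∧ b = 0 ∧ c = 0)) :
    let Z : Matrix (Fin 2) (Fin 2) ℂ :=
      !![Complex.I * a, (b : ℂ) + Complex.I * c; -(b : ℂ) + Complex.I * c, -(Complex.I * a)]
    let r : ℝ := Real.sqrt (a^2 + b^2 + c^2)
    NormedSpace.exp Z
      = ((Real.cos r : ℂ)) • (1 : Matrix (Fin 2) (Fin 2) ℂ)
        + ((Real.sin r / r : ℝ) : ℂ) • Z := by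
  intro Z r
  -- Any norm inducing the product topology will do; `exp` itself only sees the topology.
  let _ := Matrix.linftyOpNormedRing (n := Fin 2) (α := ℂ)
  let _ := Matrix.linftyOpNormedAlgebra (R := ℝ) (n := Fin 2) (α := ℂ)
  have hs : 0 < a ^ 2 + b ^ 2 + c ^ 2 := by
    contrapose! h
    refine ⟨?_, ?_, ?_⟩ <;> nlinarith [sq_nonneg a, sq_nonneg b, sq_nonneg c]
  have hr : r ≠ 0 := (Real.sqrt_pos.mpr hs).ne'
  have hZ : Z * Z = -(r ^ 2 • 1) := by
    rw [Real.sq_sqrt hs.le]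
    exact su2Matrix_mul_self a b c
  rw [Complex.coe_smul, Complex.coe_smul]
  exact exp_eq_cos_smul_one_add_sin_div_smul hr hZ
end
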